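/- arXiv:2105.12150 — 2 statements merged into one kernel-verified Lean document; each statement's English description precedes it below -/
import Mathlib

section
/- In a median graph, two Θ-classes E_i and E_j are orthogonal if and only if the four boundary intersections ∂H_i' ∩ ∂H_j', ∂H_i'' ∩ ∂H_j', ∂H_i' ∩ ∂H_j'' and ∂H_i'' ∩ ∂H_j'' are all nonempty. -/
namespace MedianPaper

variable {V : Type*}

/-- The metric interval `I(u,v)`: vertices on shortest `(u,v)`-paths. -/
def interval (G : SimpleGraph V) (u v : V) : Set V :=
  {w | G.dist u w + G.dist w v = G.dist u v}

/-- A median graph: a connected graph in which every triple of vertices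
has a unique median. -/
def MedianGraph (G : SimpleGraph V) : Prop :=
  G.Connected ∧ ∀ x y z : V, ∃! m : V,
    m ∈ interval G x y ∧ m ∈ interval G y z ∧ m ∈ interval G z x

/-- `u v x y` span a 4-cycle `u-v-y-x-u`, with opposite edge pairs
`(uv, xy)` and `(ux, vy)`. -/
def IsSquare (G : SimpleGraph V) (u v x y : V) : Prop :=
  G.Adj u v ∧ G.Adj x y ∧ G.Adj u x ∧ G.Adj v y ∧ u ≠ y ∧ v ≠ x

/-- Two edges are in relation Θ₀ if they are opposite edges of a common 4-cycle. -/
def Theta0 (G : SimpleGraph V) (e f : Sym2 V) : Prop :=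
  ∃ u v x y : V, IsSquare G u v x y ∧ e = s(u, v) ∧ f = s(x, y)

/-- Θ : the reflexive-transitive closure of Θ₀ on the edges of `G`. -/
def Theta (G : SimpleGraph V) (e f : Sym2 V) : Prop :=
  e ∈ G.edgeSet ∧ f ∈ G.edgeSet ∧ Relation.ReflTransGen (Theta0 G) e f

/-- The Θ-classes of `G`: equivalence classes of edges under Θ. -/
def ThetaClass (G : SimpleGraph V) (C : Set (Sym2 V)) : Prop :=
  ∃ e ∈ G.edgeSet, C = {f | Theta G e f}

/-- The edge set `C` separates `u` from `v` : they lie in different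
components of `G` minus `C`. -/
def Separates (G : SimpleGraph V) (C : Set (Sym2 V)) (u v : V) : Prop :=
  ¬ (G.deleteEdges C).Reachable u v

/-- The signature `σ_{u,v}`: Θ-classes separating `u` from `v`. -/
def signature (G : SimpleGraph V) (u v : V) : Set (Set (Sym2 V)) :=
  {C | ThetaClass G C ∧ Separates G C u v}

/-- `H`, `H'` are the two connected components (halfspaces) of `G` deprived
of the edges in `C`. -/
def IsHalfspacePair (G : SimpleGraph V) (C : Set (Sym2 V)) (H H' : Set V) : Prop :=
  H.Nonempty ∧ H'.Nonempty ∧ Disjoint H H' ∧ H ∪ H' = Set.univ ∧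
  (∀ x ∈ H, ∀ y ∈ H, (G.deleteEdges C).Reachable x y) ∧
  (∀ x ∈ H', ∀ y ∈ H', (G.deleteEdges C).Reachable x y) ∧
  (∀ x ∈ H, ∀ y ∈ H', ¬ (G.deleteEdges C).Reachable x y)

/-- The boundary of a halfspace `H` of the Θ-class `C` : vertices of `H`
incident to an edge of `C`. -/
def boundarySet (G : SimpleGraph V) (C : Set (Sym2 V)) (H : Set V) : Set V :=
  {x | x ∈ H ∧ ∃ y, G.Adj x y ∧ s(x, y) ∈ C}

/-- Orthogonality of Θ-classes: there is a common square using both. -/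
def Orthogonal (G : SimpleGraph V) (C₁ C₂ : Set (Sym2 V)) : Prop :=
  ∃ u v x y : V, IsSquare G u v x y ∧
    s(u, v) ∈ C₁ ∧ s(x, y) ∈ C₁ ∧ s(u, x) ∈ C₂ ∧ s(v, y) ∈ C₂

/-- A pairwise orthogonal family (POF) of Θ-classes. -/
def IsPOF (G : SimpleGraph V) (X : Set (Set (Sym2 V))) : Prop :=
  (∀ C ∈ X, ThetaClass G C) ∧
  ∀ C ∈ X, ∀ C' ∈ X, C ≠ C' → Orthogonal G C C'

/-- The `k`-dimensional hypercube graph, on subsets of `{1,…,k}`;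
two subsets are adjacent iff their symmetric difference has one element. -/
def cubeGraph (k : ℕ) : SimpleGraph (Finset (Fin k)) where
  Adj A B := (symmDiff A B).card = 1
  symm := by
    constructor
    intro A B h
    rwa [symmDiff_comm] at h
  loopless := by
    constructor
    intro A h
    simp [symmDiff_self] at h

/-- `S` induces a hypercube of dimension `k` in `G`. -/
def IsCubeDim (G : SimpleGraph V) (S : Set V) (k : ℕ) : Prop :=
  Nonempty ((G.induce S) ≃g cubeGraph k)

/-- `S` induces a hypercube in `G`. -/
def IsInducedCube (G : SimpleGraph V) (S : Set V) : Prop :=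
  ∃ k, IsCubeDim G S k

/-- The dimension of `G` is `d`: the largest dimension of an induced hypercube. -/
def GraphDim (G : SimpleGraph V) (d : ℕ) : Prop :=
  (∃ S : Set V, IsCubeDim G S d) ∧ ∀ (S : Set V) (k : ℕ), IsCubeDim G S k → k ≤ d

/-- The Θ-classes of the edges of the induced subgraph on `S`. -/
def cubeClasses (G : SimpleGraph V) (S : Set V) : Set (Set (Sym2 V)) :=
  {C | ThetaClass G C ∧ ∃ x ∈ S, ∃ y ∈ S, G.Adj x y ∧ s(x, y) ∈ C}

/-- With the `v₀`-orientation, `b ∈ S` is the basis of `S`: all edges of `S`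
incident to `b` are outgoing from `b`. -/
def IsBasis (G : SimpleGraph V) (v₀ : V) (S : Set V) (b : V) : Prop :=
  b ∈ S ∧ ∀ w ∈ S, G.Adj b w → G.dist v₀ b < G.dist v₀ w

/-- With the `v₀`-orientation, `b ∈ S` is the anti-basis of `S`: all edges of `S`
incident to `b` are ingoing to `b`. -/
def IsAntiBasis (G : SimpleGraph V) (v₀ : V) (S : Set V) (b : V) : Prop :=
  b ∈ S ∧ ∀ w ∈ S, G.Adj b w → G.dist v₀ w < G.dist v₀ b

/-- `ℰ⁻(v)` : the Θ-classes containing at least one edge ingoing to `v`. -/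
def inClasses (G : SimpleGraph V) (v₀ v : V) : Set (Set (Sym2 V)) :=
  {C | ThetaClass G C ∧ ∃ u, G.Adj u v ∧ G.dist v₀ u < G.dist v₀ v ∧ s(u, v) ∈ C}

/-- The ladder set `L_{u,v}`: classes of the signature `σ_{u,v}` having an
edge incident to `u`. -/
def ladder (G : SimpleGraph V) (u v : V) : Set (Set (Sym2 V)) :=
  {C | C ∈ signature G u v ∧ ∃ w, G.Adj u w ∧ s(u, w) ∈ C}

/-- A POF each of whose classes has an edge outgoing from `u`. -/
def OutgoingPOF (G : SimpleGraph V) (v₀ u : V) (L : Set (Set (Sym2 V))) : Prop :=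
  IsPOF G L ∧ ∀ C ∈ L, ∃ w, G.Adj u w ∧ G.dist v₀ u < G.dist v₀ w ∧ s(u, w) ∈ C

/-- A POF each of whose classes has an edge ingoing to `u`. -/
def IngoingPOF (G : SimpleGraph V) (v₀ u : V) (X : Set (Set (Sym2 V))) : Prop :=
  IsPOF G X ∧ ∀ C ∈ X, ∃ w, G.Adj w u ∧ G.dist v₀ w < G.dist v₀ u ∧ s(w, u) ∈ C

/-- `m` is a median of the triple `x, y, z`. -/
def IsMedian (G : SimpleGraph V) (x y z m : V) : Prop :=
  m ∈ interval G x y ∧ m ∈ interval G y z ∧ m ∈ interval G z x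

/-- `b` is the milestone following `a` on the way to `v`: `b` is the anti-basis of
the induced hypercube with basis `a` whose Θ-classes are the ladder set `L_{a,v}`. -/
def NextMilestone (G : SimpleGraph V) (v₀ v a b : V) : Prop :=
  ∃ S : Set V, IsInducedCube G S ∧ IsBasis G v₀ S a ∧ IsAntiBasis G v₀ S b ∧
    cubeClasses G S = ladder G a v

/-- The milestone set `Π(u,v)`: vertices obtained from `u` by iterating the
next-milestone step towards `v`. -/
def MilestoneSet (G : SimpleGraph V) (v₀ u v : V) : Set V :=
  {p | Relation.ReflTransGen (fun a b => NextMilestone G v₀ v a b) u p}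

/-- The penultimate milestone `π̄(u,v)`: the milestone of `Π(u,v)` other than `v`
closest to `v`, i.e. whose next milestone is `v` itself. -/
def IsPenultimate (G : SimpleGraph V) (v₀ u v p : V) : Prop :=
  p ∈ MilestoneSet G v₀ u v ∧ p ≠ v ∧ NextMilestone G v₀ v p v

/-- A convex set of vertices. -/
def ConvexSet (G : SimpleGraph V) (H : Set V) : Prop :=
  ∀ u ∈ H, ∀ v ∈ H, interval G u v ⊆ H

/-- A gated set of vertices: each vertex has a gate in `H`. -/
def GatedSet (G : SimpleGraph V) (H : Set V) : Prop :=
  ∀ x : V, ∃ g ∈ H, ∀ h ∈ H, g ∈ interval G x h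



/-!
In a median graph the Θ-class of an edge `ab` is the set of edges between `W_{ab}` and
`W_{ba}` (the vertices closer to `a`, resp. to `b`), and these two sets are its halfspaces.
The key fact is that opposite edges `uv`, `xy` of a square have `W_{uv} = W_{xy}`, because a
median graph contains no `K_{2,3}`; walking from `ab` to any edge between `W_{ab}` and `W_{ba}`
through a ladder of squares then identifies the Θ-class.

An orthogonality square has one corner in each of the four quadrants. Conversely, if `p` lies
on both boundaries `∂H₁ ∩ ∂H₂`, with neighbours `p₁`, `p₂` across the two classes, and `z` lies
in the opposite quadrant, then the median of `p₁, p₂, z` closes `p₁ p p₂` to a square.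
-/

def wSet (G : SimpleGraph V) (a b : V) : Set V :=
  {w | G.dist w a < G.dist w b}

def crossEdges (G : SimpleGraph V) (a b : V) : Set (Sym2 V) :=
  {e | ∃ u v, e = s(u, v) ∧ G.Adj u v ∧ u ∈ wSet G a b ∧ v ∈ wSet G b a}

def squareStep (G : SimpleGraph V) (e f : V × V) : Prop :=
  IsSquare G e.1 e.2 f.1 f.2

section

open SimpleGraph

variable {G : SimpleGraph V} {C C₁ C₂ D : Set (Sym2 V)} {H H' H₁ H₁' H₂ H₂' K K' : Set V}
  {e f : Sym2 V} {a b m p p₁ p₂ q u v w x y z : V}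

lemma exists_adj_dist_add_one_eq (hG : G.Connected) (hne : x ≠ a) :
    ∃ x₁, G.Adj x x₁ ∧ G.dist x₁ a + 1 = G.dist x a := by
  obtain ⟨P, hP⟩ := hG.exists_walk_length_eq_dist x a
  cases P with
  | nil => exact absurd rfl hne
  | @cons _ x₁ _ hx P =>
    refine ⟨x₁, hx, le_antisymm ?_ ?_⟩
    · rw [← hP, Walk.length_cons]
      exact Nat.add_le_add_right (dist_le P) 1
    · have := hG.dist_triangle (u := x) (v := x₁) (w := a)
      rw [dist_eq_one_iff_adj.mpr hx] at this
      omega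

lemma self_mem_wSet (hab : G.Adj a b) : a ∈ wSet G a b := by
  show G.dist a a < G.dist a b
  rw [dist_self, dist_eq_one_iff_adj.mpr hab]
  exact one_pos

lemma disjoint_wSet : Disjoint (wSet G a b) (wSet G b a) :=
  Set.disjoint_left.mpr fun w (h₁ : G.dist w a < G.dist w b) (h₂ : G.dist w b < G.dist w a) =>
    lt_asymm h₁ h₂

lemma crossEdges_comm : crossEdges G a b = crossEdges G b a := by
  ext e
  constructor <;> rintro ⟨u, v, rfl, huv, hu, hv⟩ <;> exact ⟨v, u, Sym2.eq_swap, huv.symm, hv, hu⟩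

lemma mem_crossEdges_self (hab : G.Adj a b) : s(a, b) ∈ crossEdges G a b :=
  ⟨a, b, rfl, hab, self_mem_wSet hab, self_mem_wSet hab.symm⟩

lemma crossEdges_congr (h : wSet G x y = wSet G a b) (h' : wSet G y x = wSet G b a) :
    crossEdges G x y = crossEdges G a b := by
  simp only [crossEdges, h, h']

namespace IsSquare

lemma symm (h : IsSquare G u v x y) : IsSquare G x y u v :=
  ⟨h.2.1, h.1, h.2.2.1.symm, h.2.2.2.1.symm, h.2.2.2.2.2.symm, h.2.2.2.2.1.symm⟩

lemma swap (h : IsSquare G u v x y) : IsSquare G v u y x :=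
  ⟨h.1.symm, h.2.1.symm, h.2.2.2.1, h.2.2.1, h.2.2.2.2.2, h.2.2.2.2.1⟩

lemma transpose (h : IsSquare G u v x y) : IsSquare G u x v y :=
  ⟨h.2.2.1, h.2.2.2.1, h.1, h.2.1, h.2.2.2.2.1, h.2.2.2.2.2.symm⟩

lemma theta0 (h : IsSquare G u v x y) : Theta0 G s(u, v) s(x, y) :=
  ⟨u, v, x, y, h, rfl, rfl⟩

end IsSquare

lemma ThetaClass.adj_of_mem (hC : ThetaClass G C) (h : s(u, v) ∈ C) : G.Adj u v := by
  obtain ⟨e, -, rfl⟩ := hC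
  exact h.2.1

namespace IsHalfspacePair

lemma symm (hH : IsHalfspacePair G C H H') : IsHalfspacePair G C H' H := by
  obtain ⟨h₁, h₂, h₃, h₄, h₅, h₆, h₇⟩ := hH
  exact ⟨h₂, h₁, h₃.symm, Set.union_comm H H' ▸ h₄, h₆, h₅, fun x hx y hy h => h₇ y hy x hx h.symm⟩

lemma mem_or_mem (hH : IsHalfspacePair G C H H') (x : V) : x ∈ H ∨ x ∈ H' :=
  Set.eq_univ_iff_forall.mp hH.2.2.2.1 x

lemma reachable (hH : IsHalfspacePair G C H H') (hx : x ∈ H) (hy : y ∈ H) :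
    (G.deleteEdges C).Reachable x y :=
  hH.2.2.2.2.1 x hx y hy

lemma not_reachable (hH : IsHalfspacePair G C H H') (hx : x ∈ H) (hy : y ∈ H') :
    ¬ (G.deleteEdges C).Reachable x y :=
  hH.2.2.2.2.2.2 x hx y hy

lemma false_of_mem_inter (hH : IsHalfspacePair G C H H') (hK : IsHalfspacePair G C K K')
    (hx : x ∈ H ∩ K) (hy : y ∈ H ∩ K') : False :=
  hK.not_reachable hx.2 hy.2 (hH.reachable hx.1 hy.1)

end IsHalfspacePair

namespace MedianGraph

lemma dist_ne_of_adj (hmed : MedianGraph G) (huv : G.Adj u v) (w : V) :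
    G.dist w u ≠ G.dist w v := by
  intro heq
  obtain ⟨m, hm₁, hm₂, hm₃⟩ := (hmed.2 u v w).exists
  simp only [interval, Set.mem_ofPred_eq, dist_eq_one_iff_adj.mpr huv] at hm₁ hm₂ hm₃
  have hvu := dist_eq_one_iff_adj.mpr huv.symm
  rcases Nat.eq_zero_or_pos (G.dist u m) with h | h
  · obtain rfl := hmed.1.dist_eq_zero_iff.mp h
    rw [dist_comm (u := w), dist_comm (u := w)] at heq
    omega
  · obtain rfl := hmed.1.dist_eq_zero_iff.mp (by omega : G.dist m v = 0)
    rw [hvu] at hm₃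
    omega

lemma dist_eq_dist_add_one_of_adj (hmed : MedianGraph G) (huv : G.Adj u v) (w : V) :
    G.dist w u = G.dist w v + 1 ∨ G.dist w v = G.dist w u + 1 := by
  have := hmed.dist_ne_of_adj huv w
  rcases huv.diff_dist_adj (u := w) with h | h | h <;> omega

lemma dist_eq_two (hmed : MedianGraph G) (hp : G.Adj w p) (hq : G.Adj w q) (hne : p ≠ q) :
    G.dist p q = 2 := by
  have hle := hmed.1.dist_triangle (u := p) (v := w) (w := q)
  rw [dist_comm (u := p) (v := w), dist_eq_one_iff_adj.mpr hp, dist_eq_one_iff_adj.mpr hq] at hle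
  have hnadj : ¬ G.Adj p q := fun hpq => hmed.dist_ne_of_adj hpq w (by
    rw [dist_eq_one_iff_adj.mpr hp, dist_eq_one_iff_adj.mpr hq])
  have := hmed.1.one_lt_dist_of_ne_of_not_adj hne hnadj
  omega

lemma mem_interval_of_adj (hmed : MedianGraph G) (hp : G.Adj p w) (hq : G.Adj w q)
    (hne : p ≠ q) : w ∈ interval G p q := by
  simp only [interval, Set.mem_ofPred_eq, dist_eq_one_iff_adj.mpr hp,
    dist_eq_one_iff_adj.mpr hq, hmed.dist_eq_two hp.symm hq hne]

/-- Otherwise both `u` and `y` would be medians of `v, x, m`. -/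
lemma eq_of_three_common_neighbors (hmed : MedianGraph G) (hvx : v ≠ x) (hvm : v ≠ m)
    (hxm : x ≠ m) (huv : G.Adj u v) (hux : G.Adj u x) (hum : G.Adj u m) (hyv : G.Adj y v)
    (hyx : G.Adj y x) (hym : G.Adj y m) : u = y :=
  (hmed.2 v x m).unique
    ⟨hmed.mem_interval_of_adj huv.symm hux hvx, hmed.mem_interval_of_adj hux.symm hum hxm,
      hmed.mem_interval_of_adj hum.symm huv hvm.symm⟩
    ⟨hmed.mem_interval_of_adj hyv.symm hyx hvx, hmed.mem_interval_of_adj hyx.symm hym hxm,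
      hmed.mem_interval_of_adj hym.symm hyv hvm.symm⟩

lemma exists_adj_adj_dist_lt (hmed : MedianGraph G) (hp₁ : G.Adj p p₁) (hp₂ : G.Adj p p₂)
    (hne : p₁ ≠ p₂) (h₁ : G.dist z p₁ < G.dist z p) (h₂ : G.dist z p₂ < G.dist z p) :
    ∃ m, G.Adj p₁ m ∧ G.Adj p₂ m ∧ G.dist z m < G.dist z p₁ := by
  have e₁ := hmed.dist_eq_dist_add_one_of_adj hp₁ z
  have e₂ := hmed.dist_eq_dist_add_one_of_adj hp₂ z
  have h₁₂ := hmed.dist_eq_two hp₁ hp₂ hne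
  obtain ⟨m, hm₁, hm₂, hm₃⟩ := (hmed.2 p₁ p₂ z).exists
  simp only [interval, Set.mem_ofPred_eq] at hm₁ hm₂ hm₃
  have c₁ : G.dist p₁ m = G.dist m p₁ := dist_comm
  have c₂ : G.dist p₂ z = G.dist z p₂ := dist_comm
  have c₃ : G.dist m z = G.dist z m := dist_comm
  have c₄ : G.dist m p₂ = G.dist p₂ m := dist_comm
  refine ⟨m, dist_eq_one_iff_adj.mp ?_, dist_eq_one_iff_adj.mp ?_, ?_⟩ <;> omega

lemma mem_or_mem_wSet (hmed : MedianGraph G) (hab : G.Adj a b) (w : V) :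
    w ∈ wSet G a b ∨ w ∈ wSet G b a :=
  (hmed.dist_ne_of_adj hab w).lt_or_gt

lemma mem_wSet_of_adj (hmed : MedianGraph G) (hab : G.Adj a b) (hax : G.Adj a x)
    (hxb : x ≠ b) : x ∈ wSet G a b := by
  show G.dist x a < G.dist x b
  rw [dist_comm, dist_eq_one_iff_adj.mpr hax, hmed.dist_eq_two hax hab hxb]
  exact one_lt_two

end MedianGraph

namespace IsSquare

/-- If `z` were closer to `u` and to `y`, the median of `u, y, z` would be a third common
neighbour of `u` and `y` besides `v` and `x`. -/
lemma wSet_subset (hsq : IsSquare G u v x y) (hmed : MedianGraph G) :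
    wSet G u v ⊆ wSet G x y := by
  obtain ⟨huv, hxy, hux, hvy, huy, hvx⟩ := hsq
  intro z (hz : G.dist z u < G.dist z v)
  refine (hmed.mem_or_mem_wSet hxy z).resolve_right fun (hz' : G.dist z y < G.dist z x) => ?_
  have := hmed.dist_eq_dist_add_one_of_adj huv z
  have := hmed.dist_eq_dist_add_one_of_adj hux z
  have := hmed.dist_eq_dist_add_one_of_adj hvy z
  obtain ⟨m, hum, hym, hm⟩ :=
    hmed.exists_adj_adj_dist_lt huv.symm hvy huy (by omega) (by omega)
  refine huy (hmed.eq_of_three_common_neighbors hvx ?_ ?_ huv hux hum hvy.symm hxy.symm hym) <;>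
    rintro rfl <;> omega

lemma wSet_eq (hsq : IsSquare G u v x y) (hmed : MedianGraph G) : wSet G u v = wSet G x y :=
  (hsq.wSet_subset hmed).antisymm (hsq.symm.wSet_subset hmed)

lemma crossEdges_eq (hsq : IsSquare G u v x y) (hmed : MedianGraph G) :
    crossEdges G u v = crossEdges G x y :=
  crossEdges_congr (hsq.wSet_eq hmed) (hsq.swap.wSet_eq hmed)

end IsSquare

namespace MedianGraph

/-- The median step at `x` towards `b` moves the crossing edge `xy` one step closer to `a`. -/
lemma exists_square_of_ne (hmed : MedianGraph G) (hab : G.Adj a b) (hxy : G.Adj x y)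
    (hx : x ∈ wSet G a b) (hy : y ∈ wSet G b a) (hxa : x ≠ a) :
    ∃ x₁ y₁, IsSquare G x₁ y₁ x y ∧ x₁ ∈ wSet G a b ∧ y₁ ∈ wSet G b a ∧
      G.dist x₁ a < G.dist x a := by
  have hx' : G.dist x a < G.dist x b := hx
  have hy' : G.dist y b < G.dist y a := hy
  obtain ⟨x₁, hxx₁, hx₁a⟩ := exists_adj_dist_add_one_eq hmed.1 hxa
  have d₁ := hmed.dist_eq_dist_add_one_of_adj hab x
  have d₂ := hmed.dist_eq_dist_add_one_of_adj hab y
  have d₃ := hmed.dist_eq_dist_add_one_of_adj hab x₁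
  have d₄ := hmed.dist_eq_dist_add_one_of_adj hxx₁ b
  have d₅ := hmed.dist_eq_dist_add_one_of_adj hxy b
  have d₆ := hmed.dist_eq_dist_add_one_of_adj hxy a
  have c₁ : G.dist b x = G.dist x b := dist_comm
  have c₂ : G.dist b x₁ = G.dist x₁ b := dist_comm
  have c₃ : G.dist b y = G.dist y b := dist_comm
  have c₄ : G.dist a x = G.dist x a := dist_comm
  have c₅ : G.dist a y = G.dist y a := dist_comm
  have hx₁ : G.dist x₁ a < G.dist x₁ b := by omega
  have hx₁y : x₁ ≠ y := disjoint_wSet.ne_of_mem hx₁ hy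
  obtain ⟨y₁, hx₁y₁, hyy₁, hy₁b⟩ :=
    hmed.exists_adj_adj_dist_lt (z := b) hxx₁ hxy hx₁y (by omega) (by omega)
  have d₇ := hmed.dist_eq_dist_add_one_of_adj hyy₁ a
  have c₆ : G.dist a y₁ = G.dist y₁ a := dist_comm
  have c₇ : G.dist b y₁ = G.dist y₁ b := dist_comm
  have hy₁ : G.dist y₁ b < G.dist y₁ a := by omega
  refine ⟨x₁, y₁, ⟨hx₁y₁, hxy, hxx₁.symm, hyy₁.symm, hx₁y, ?_⟩, hx₁, hy₁, by omega⟩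
  exact (disjoint_wSet.ne_of_mem hx hy₁).symm

lemma reflTransGen_squareStep (hmed : MedianGraph G) (hab : G.Adj a b) (hxy : G.Adj x y)
    (hx : x ∈ wSet G a b) (hy : y ∈ wSet G b a) :
    Relation.ReflTransGen (squareStep G) (a, b) (x, y) := by
  induction hn : G.dist x a using Nat.strong_induction_on generalizing x y with
  | _ n ih =>
  by_cases hxa : x = a
  · subst hxa
    obtain rfl : y = b := by
      have hy' : G.dist y b < G.dist y x := hy
      rw [dist_comm (u := y) (v := x), dist_eq_one_iff_adj.mpr hxy] at hy'
      exact hmed.1.dist_eq_zero_iff.mp (by omega)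
    rfl
  obtain ⟨x₁, y₁, hsq, hx₁, hy₁, hlt⟩ := hmed.exists_square_of_ne hab hxy hx hy hxa
  exact (ih _ (hn ▸ hlt) hsq.1 hx₁ hy₁ rfl).tail hsq

lemma wSet_eq_of_reflTransGen (hmed : MedianGraph G) {e f : V × V}
    (h : Relation.ReflTransGen (squareStep G) e f) : wSet G f.1 f.2 = wSet G e.1 e.2 := by
  induction h with
  | refl => rfl
  | tail _ hsq ih => exact (hsq.wSet_eq hmed).symm.trans ih

lemma wSet_eq_of_mem_wSet (hmed : MedianGraph G) (hab : G.Adj a b) (hxy : G.Adj x y)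
    (hx : x ∈ wSet G a b) (hy : y ∈ wSet G b a) : wSet G x y = wSet G a b :=
  hmed.wSet_eq_of_reflTransGen (hmed.reflTransGen_squareStep hab hxy hx hy)

lemma crossEdges_eq_of_mem (hmed : MedianGraph G) (hab : G.Adj a b)
    (h : s(x, y) ∈ crossEdges G a b) : crossEdges G x y = crossEdges G a b := by
  obtain ⟨u, v, huv, hadj, hu, hv⟩ := h
  have key : crossEdges G u v = crossEdges G a b :=
    crossEdges_congr (hmed.wSet_eq_of_mem_wSet hab hadj hu hv)
      (hmed.wSet_eq_of_mem_wSet hab.symm hadj.symm hv hu)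
  rcases Sym2.eq_iff.mp huv with ⟨rfl, rfl⟩ | ⟨rfl, rfl⟩
  · exact key
  · rw [crossEdges_comm, key]

lemma mem_crossEdges_of_theta0 (hmed : MedianGraph G) (hab : G.Adj a b)
    (he : e ∈ crossEdges G a b) (h : Theta0 G e f) : f ∈ crossEdges G a b := by
  obtain ⟨u, v, x, y, hsq, rfl, rfl⟩ := h
  rw [← hmed.crossEdges_eq_of_mem hab he, hsq.crossEdges_eq hmed]
  exact mem_crossEdges_self hsq.2.1

lemma setOf_theta_eq_crossEdges (hmed : MedianGraph G) (hab : G.Adj a b) :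
    {f | Theta G s(a, b) f} = crossEdges G a b := by
  ext f
  constructor
  · rintro ⟨-, -, h⟩
    induction h with
    | refl => exact mem_crossEdges_self hab
    | tail _ h₀ ih => exact hmed.mem_crossEdges_of_theta0 hab ih h₀
  · rintro ⟨x, y, rfl, hxy, hx, hy⟩
    exact ⟨hab, hxy, (hmed.reflTransGen_squareStep hab hxy hx hy).lift
      (fun e => s(e.1, e.2)) fun _ _ hsq => hsq.theta0⟩

lemma mem_wSet_of_reachable (hmed : MedianGraph G) (hab : G.Adj a b)
    (h : (G.deleteEdges (crossEdges G a b)).Reachable x y) (hx : x ∈ wSet G a b) :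
    y ∈ wSet G a b := by
  obtain ⟨q⟩ := h
  induction q with
  | nil => exact hx
  | cons hadj _ ih =>
    rw [deleteEdges_adj] at hadj
    exact ih ((hmed.mem_or_mem_wSet hab _).resolve_right fun h =>
      hadj.2 ⟨_, _, rfl, hadj.1, hx, h⟩)

end MedianGraph

namespace ThetaClass

lemma eq_crossEdges (hC : ThetaClass G C) (hmed : MedianGraph G) (h : s(u, v) ∈ C) :
    C = crossEdges G u v := by
  obtain ⟨e, he, rfl⟩ := hC
  induction e using Sym2.ind with
  | h a b =>
    rw [hmed.setOf_theta_eq_crossEdges he] at h ⊢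
    exact (hmed.crossEdges_eq_of_mem he h).symm

lemma eq_of_mem (hC : ThetaClass G C) (hD : ThetaClass G D) (hmed : MedianGraph G)
    (heC : e ∈ C) (heD : e ∈ D) : C = D := by
  induction e using Sym2.ind with
  | h u v => exact (hC.eq_crossEdges hmed heC).trans (hD.eq_crossEdges hmed heD).symm

lemma mem_of_theta0 (hC : ThetaClass G C) (hmed : MedianGraph G) (he : e ∈ C)
    (h : Theta0 G e f) : f ∈ C := by
  induction e using Sym2.ind with
  | h u v =>
    have hadj := hC.adj_of_mem he
    rw [hC.eq_crossEdges hmed he]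
    exact hmed.mem_crossEdges_of_theta0 hadj (mem_crossEdges_self hadj) h

end ThetaClass

namespace IsHalfspacePair

lemma subset_wSet (hH : IsHalfspacePair G C H H') (hmed : MedianGraph G) (hC : ThetaClass G C)
    (huv : s(u, v) ∈ C) (hu : u ∈ H) : H ⊆ wSet G u v := by
  have hadj := hC.adj_of_mem huv
  intro x hx
  have hreach := hH.reachable hu hx
  rw [hC.eq_crossEdges hmed huv] at hreach
  exact hmed.mem_wSet_of_reachable hadj hreach (self_mem_wSet hadj)

lemma eq_wSet (hH : IsHalfspacePair G C H H') (hmed : MedianGraph G) (hC : ThetaClass G C)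
    (huv : s(u, v) ∈ C) (hu : u ∈ H) : H = wSet G u v ∧ H' = wSet G v u := by
  have hsub := hH.subset_wSet hmed hC huv hu
  have hv : v ∈ H' := (hH.mem_or_mem v).resolve_left fun hv =>
    Set.disjoint_left.mp disjoint_wSet (hsub hv) (self_mem_wSet (hC.adj_of_mem huv).symm)
  have hsub' := hH.symm.subset_wSet hmed hC (Sym2.eq_swap (a := u) ▸ huv) hv
  refine ⟨hsub.antisymm fun x hx => ?_, hsub'.antisymm fun x hx => ?_⟩
  · exact (hH.mem_or_mem x).resolve_right fun h =>
      Set.disjoint_left.mp disjoint_wSet hx (hsub' h)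
  · exact (hH.mem_or_mem x).resolve_left fun h =>
      Set.disjoint_left.mp disjoint_wSet (hsub h) hx

end IsHalfspacePair

lemma IsSquare.mem_halfspace (hsq : IsSquare G u v x y) (hmed : MedianGraph G)
    (hC : ThetaClass G C) (hH : IsHalfspacePair G C H H') (huv : s(u, v) ∈ C) :
    u ∈ H ∧ x ∈ H ∨ v ∈ H ∧ y ∈ H := by
  obtain ⟨huv', -, hux, hvy, huy, hvx⟩ := hsq
  rcases hH.mem_or_mem u with hu | hu
  · rw [(hH.eq_wSet hmed hC huv hu).1]
    exact Or.inl ⟨self_mem_wSet huv', hmed.mem_wSet_of_adj huv' hux hvx.symm⟩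
  · rw [(hH.symm.eq_wSet hmed hC huv hu).2]
    exact Or.inr ⟨self_mem_wSet huv'.symm, hmed.mem_wSet_of_adj huv'.symm hvy huy.symm⟩

lemma Orthogonal.boundarySet_inter_nonempty (hO : Orthogonal G C₁ C₂) (hmed : MedianGraph G)
    (h₁ : ThetaClass G C₁) (h₂ : ThetaClass G C₂) (hH : IsHalfspacePair G C₁ H H')
    (hK : IsHalfspacePair G C₂ K K') :
    (boundarySet G C₁ H ∩ boundarySet G C₂ K).Nonempty := by
  obtain ⟨u, v, x, y, hsq, huv, hxy, hux, hvy⟩ := hO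
  have hvu : s(v, u) ∈ C₁ := Sym2.eq_swap (a := u) ▸ huv
  have hyx : s(y, x) ∈ C₁ := Sym2.eq_swap (a := x) ▸ hxy
  have hxu : s(x, u) ∈ C₂ := Sym2.eq_swap (a := u) ▸ hux
  have hyv : s(y, v) ∈ C₂ := Sym2.eq_swap (a := v) ▸ hvy
  have hH_cases := hsq.mem_halfspace hmed h₁ hH huv
  have hK_cases := hsq.transpose.mem_halfspace hmed h₂ hK hux
  obtain ⟨huv', hxy', hux', hvy', -, -⟩ := hsq
  rcases hH_cases with ⟨huH, hxH⟩ | ⟨hvH, hyH⟩ <;>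
    rcases hK_cases with ⟨huK, hvK⟩ | ⟨hxK, hyK⟩
  · exact ⟨u, ⟨huH, v, huv', huv⟩, huK, x, hux', hux⟩
  · exact ⟨x, ⟨hxH, y, hxy', hxy⟩, hxK, u, hux'.symm, hxu⟩
  · exact ⟨v, ⟨hvH, u, huv'.symm, hvu⟩, hvK, y, hvy', hvy⟩
  · exact ⟨y, ⟨hyH, x, hxy'.symm, hyx⟩, hyK, v, hvy'.symm, hyv⟩

lemma orthogonal_of_mem_boundarySet (hmed : MedianGraph G) (h₁ : ThetaClass G C₁)
    (h₂ : ThetaClass G C₂) (hne : C₁ ≠ C₂) (hH₁ : IsHalfspacePair G C₁ H₁ H₁')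
    (hH₂ : IsHalfspacePair G C₂ H₂ H₂') (hp₁ : p ∈ boundarySet G C₁ H₁)
    (hp₂ : p ∈ boundarySet G C₂ H₂) (hz₁ : z ∈ H₁') (hz₂ : z ∈ H₂') : Orthogonal G C₁ C₂ := by
  obtain ⟨hpH₁, p₁, hpp₁, hC₁⟩ := hp₁
  obtain ⟨hpH₂, p₂, hpp₂, hC₂⟩ := hp₂
  have hp₁₂ : p₁ ≠ p₂ := by
    rintro rfl
    exact hne (h₁.eq_of_mem h₂ hmed hC₁ hC₂)
  have hz₁' : z ∈ wSet G p₁ p := (hH₁.eq_wSet hmed h₁ hC₁ hpH₁).2 ▸ hz₁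
  have hz₂' : z ∈ wSet G p₂ p := (hH₂.eq_wSet hmed h₂ hC₂ hpH₂).2 ▸ hz₂
  obtain ⟨m, hp₁m, hp₂m, hm⟩ := hmed.exists_adj_adj_dist_lt hpp₁ hpp₂ hp₁₂ hz₁' hz₂'
  have hsq : IsSquare G p p₁ p₂ m :=
    ⟨hpp₁, hp₂m, hpp₂, hp₁m, by rintro rfl; exact lt_asymm hm hz₁', hp₁₂⟩
  exact ⟨p, p₁, p₂, m, hsq, hC₁, h₁.mem_of_theta0 hmed hC₁ hsq.theta0, hC₂,
    h₂.mem_of_theta0 hmed hC₂ hsq.transpose.theta0⟩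

end

theorem orthogonal_iff_boundaries_meet_general {V : Type*} (G : SimpleGraph V)
    (hmed : MedianGraph G) (C₁ C₂ : Set (Sym2 V))
    (h₁ : ThetaClass G C₁) (h₂ : ThetaClass G C₂)
    (H₁ H₁' H₂ H₂' : Set V)
    (hH₁ : IsHalfspacePair G C₁ H₁ H₁') (hH₂ : IsHalfspacePair G C₂ H₂ H₂') :
    Orthogonal G C₁ C₂ ↔
      ((boundarySet G C₁ H₁ ∩ boundarySet G C₂ H₂).Nonempty ∧
       (boundarySet G C₁ H₁' ∩ boundarySet G C₂ H₂).Nonempty ∧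
       (boundarySet G C₁ H₁ ∩ boundarySet G C₂ H₂').Nonempty ∧
       (boundarySet G C₁ H₁' ∩ boundarySet G C₂ H₂').Nonempty) := by
  constructor
  · intro hO
    exact ⟨hO.boundarySet_inter_nonempty hmed h₁ h₂ hH₁ hH₂,
      hO.boundarySet_inter_nonempty hmed h₁ h₂ hH₁.symm hH₂,
      hO.boundarySet_inter_nonempty hmed h₁ h₂ hH₁ hH₂.symm,
      hO.boundarySet_inter_nonempty hmed h₁ h₂ hH₁.symm hH₂.symm⟩
  · rintro ⟨⟨p, hp₁, hp₂⟩, -, ⟨r, hr₁, hr₂⟩, ⟨z, hz₁, hz₂⟩⟩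
    have hne : C₁ ≠ C₂ := by
      rintro rfl
      exact hH₁.false_of_mem_inter hH₂ ⟨hp₁.1, hp₂.1⟩ ⟨hr₁.1, hr₂.1⟩
    exact orthogonal_of_mem_boundarySet hmed h₁ h₂ hne hH₁ hH₂ hp₁ hp₂ hz₁.1 hz₂.1

/-- In a median graph, two Θ-classes are orthogonal iff the four
pairwise intersections of the boundaries of their halfspaces are nonempty. -/
theorem orthogonal_iff_boundaries_meet {V : Type*} [Fintype V] (G : SimpleGraph V)
    (hmed : MedianGraph G) (C₁ C₂ : Set (Sym2 V))
    (h₁ : ThetaClass G C₁) (h₂ : ThetaClass G C₂)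
    (H₁ H₁' H₂ H₂' : Set V)
    (hH₁ : IsHalfspacePair G C₁ H₁ H₁') (hH₂ : IsHalfspacePair G C₂ H₂ H₂') :
    Orthogonal G C₁ C₂ ↔
      ((boundarySet G C₁ H₁ ∩ boundarySet G C₂ H₂).Nonempty ∧
       (boundarySet G C₁ H₁' ∩ boundarySet G C₂ H₂).Nonempty ∧
       (boundarySet G C₁ H₁ ∩ boundarySet G C₂ H₂').Nonempty ∧
       (boundarySet G C₁ H₁' ∩ boundarySet G C₂ H₂').Nonempty) :=
  orthogonal_iff_boundaries_meet_general G hmed C₁ C₂ h₁ h₂ H₁ H₁' H₂ H₂' hH₁ hH₂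

end MedianPaper
end

section
/- In a median graph, let xu be an edge of Θ-class E_i and uy an edge of Θ-class E_j, sharing the endpoint u. If E_i and E_j are orthogonal, then there exists a vertex v adjacent to both x and y such that uyvx is a 4-cycle. -/
namespace MedianPaper

variable {V : Type*}

/-!
Every edge `ab` of a median graph splits the vertices into those closer to `a` and those closer
to `b`. Opposite edges of a square induce the same split, since otherwise two opposite corners
would have three common neighbours, a `K₂,₃`; hence the split depends only on the Θ-class.
The four corners of a square of `E_i` and `E_j` lie in the four quadrants of the two splits, so
some vertex `w` is closer to `x` than to `u` and closer to `y` than to `u`. Then `x` and `y` are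
equidistant from `w`, and the median of `x, y, w` is the fourth corner of the square.
-/

def halfspace (G : SimpleGraph V) (a b : V) : Set V :=
  {w | G.dist w a < G.dist w b}

section

variable {G : SimpleGraph V}

namespace MedianGraph

variable (hmed : MedianGraph G)
include hmed

theorem dist_eq_add_one_or_of_adj {a b : V} (hab : G.Adj a b) (w : V) :
    G.dist w b = G.dist w a + 1 ∨ G.dist w a = G.dist w b + 1 := by
  obtain ⟨m, ⟨hm_ab, hm_bw, hm_wa⟩, -⟩ := hmed.2 a b w
  simp only [interval, Set.mem_ofPred_eq] at hm_ab hm_bw hm_wa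
  have := G.dist_eq_one_iff_adj.mpr hab
  have := G.dist_comm (u := a) (v := m)
  have := G.dist_comm (u := b) (v := m)
  have := G.dist_comm (u := m) (v := w)
  have := G.dist_comm (u := b) (v := w)
  omega

theorem not_adj_of_adj_of_adj {a b c : V} (hab : G.Adj a b) (hbc : G.Adj b c) :
    ¬ G.Adj a c := fun hac => by
  have := G.dist_eq_one_iff_adj.mpr hab
  have := G.dist_eq_one_iff_adj.mpr hac
  have := hmed.dist_eq_add_one_or_of_adj hbc a
  omega

theorem dist_eq_two_of_adj_of_adj {a b c : V} (hab : G.Adj a b) (hbc : G.Adj b c)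
    (hac : a ≠ c) : G.dist a c = 2 := by
  have h_le := hmed.1.dist_triangle (u := a) (v := b) (w := c)
  rw [G.dist_eq_one_iff_adj.mpr hab, G.dist_eq_one_iff_adj.mpr hbc] at h_le
  have h_ne_zero : G.dist a c ≠ 0 := fun h => hac (hmed.1.dist_eq_zero_iff.mp h)
  have h_ne_one : G.dist a c ≠ 1 := fun h =>
    hmed.not_adj_of_adj_of_adj hab hbc (G.dist_eq_one_iff_adj.mp h)
  omega

theorem mem_interval_of_adj_of_adj {a b c : V} (hab : G.Adj a b) (hbc : G.Adj b c)
    (hac : a ≠ c) : b ∈ interval G a c := by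
  simp only [interval, Set.mem_ofPred_eq, G.dist_eq_one_iff_adj.mpr hab,
    G.dist_eq_one_iff_adj.mpr hbc, hmed.dist_eq_two_of_adj_of_adj hab hbc hac]

/-- Median graphs contain no `K₂,₃`: both `u` and `y` would be medians of `a, b, c`. -/
theorem eq_of_three_common_neighbors_s4 {u y a b c : V}
    (hua : G.Adj u a) (hub : G.Adj u b) (huc : G.Adj u c)
    (hya : G.Adj y a) (hyb : G.Adj y b) (hyc : G.Adj y c)
    (hab : a ≠ b) (hbc : b ≠ c) (hca : c ≠ a) : u = y :=
  (hmed.2 a b c).unique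
    ⟨hmed.mem_interval_of_adj_of_adj hua.symm hub hab,
      hmed.mem_interval_of_adj_of_adj hub.symm huc hbc,
      hmed.mem_interval_of_adj_of_adj huc.symm hua hca⟩
    ⟨hmed.mem_interval_of_adj_of_adj hya.symm hyb hab,
      hmed.mem_interval_of_adj_of_adj hyb.symm hyc hbc,
      hmed.mem_interval_of_adj_of_adj hyc.symm hya hca⟩

theorem exists_common_neighbor_closer {a c : V} (hac : G.dist a c = 2) {w : V}
    (hw : G.dist w a = G.dist w c) :
    ∃ m, G.Adj a m ∧ G.Adj c m ∧ G.dist w m + 1 = G.dist w a := by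
  obtain ⟨m, ⟨hm_ac, hm_cw, hm_wa⟩, -⟩ := hmed.2 a c w
  simp only [interval, Set.mem_ofPred_eq] at hm_ac hm_cw hm_wa
  have := G.dist_comm (u := a) (v := m)
  have := G.dist_comm (u := c) (v := m)
  have := G.dist_comm (u := m) (v := w)
  have := G.dist_comm (u := c) (v := w)
  exact ⟨m, G.dist_eq_one_iff_adj.mp (by omega), G.dist_eq_one_iff_adj.mp (by omega), by omega⟩

/-- The quadrangle condition. -/
theorem exists_isSquare_of_dist_lt {u x y w : V} (huy : G.Adj u y) (hux : G.Adj u x)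
    (hxy : x ≠ y) (hwx : G.dist w x < G.dist w u) (hwy : G.dist w y < G.dist w u) :
    ∃ v, IsSquare G u y x v := by
  have := hmed.dist_eq_add_one_or_of_adj hux w
  have := hmed.dist_eq_add_one_or_of_adj huy w
  obtain ⟨v, hxv, hyv, hwv⟩ := hmed.exists_common_neighbor_closer
    (hmed.dist_eq_two_of_adj_of_adj hux.symm huy hxy) (w := w) (by omega)
  refine ⟨v, huy, hxv, hux, hyv, ?_, hxy.symm⟩
  rintro rfl
  omega

theorem compl_halfspace {a b : V} (hab : G.Adj a b) : (halfspace G a b)ᶜ = halfspace G b a := by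
  ext w
  have := hmed.dist_eq_add_one_or_of_adj hab w
  simp only [halfspace, Set.mem_compl_iff, Set.mem_ofPred_eq]
  omega

theorem halfspace_subset_of_isSquare {u v x y : V} (hs : IsSquare G u v x y) :
    halfspace G u v ⊆ halfspace G x y := by
  obtain ⟨huv, hxy, hux, hvy, huy, hvx⟩ := hs
  intro w (hw : G.dist w u < G.dist w v)
  show G.dist w x < G.dist w y
  by_contra hwxy
  have := hmed.dist_eq_add_one_or_of_adj huv w
  have := hmed.dist_eq_add_one_or_of_adj hxy w
  have := hmed.dist_eq_add_one_or_of_adj hux w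
  have := hmed.dist_eq_add_one_or_of_adj hvy w
  obtain ⟨m, hum, hym, hwm⟩ := hmed.exists_common_neighbor_closer
    (hmed.dist_eq_two_of_adj_of_adj huv hvy huy) (w := w) (by omega)
  have hmv : m ≠ v := by rintro rfl; omega
  have hxm : x ≠ m := by rintro rfl; omega
  exact huy (hmed.eq_of_three_common_neighbors_s4 huv hux hum hvy.symm hxy.symm hym hvx hxm hmv)

theorem halfspace_eq_of_isSquare {u v x y : V} (hs : IsSquare G u v x y) :
    halfspace G u v = halfspace G x y :=
  (hmed.halfspace_subset_of_isSquare hs).antisymm <| hmed.halfspace_subset_of_isSquare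
    ⟨hs.2.1, hs.1, hs.2.2.1.symm, hs.2.2.2.1.symm, hs.2.2.2.2.2.symm, hs.2.2.2.2.1.symm⟩

theorem halfspace_eq_or_eq_compl_of_reflTransGen {a b : V} (hab : G.Adj a b) {f : Sym2 V}
    (h : Relation.ReflTransGen (Theta0 G) s(a, b) f) {c d : V} (hf : f = s(c, d)) :
    halfspace G c d = halfspace G a b ∨ halfspace G c d = (halfspace G a b)ᶜ := by
  induction h generalizing c d with
  | refl =>
    rcases Sym2.eq_iff.mp hf with ⟨rfl, rfl⟩ | ⟨rfl, rfl⟩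
    · exact .inl rfl
    · exact .inr (hmed.compl_halfspace hab).symm
  | tail _ hθ ih =>
    obtain ⟨p, q, r, t, hs, rfl, rfl⟩ := hθ
    have h_rt := hmed.halfspace_eq_of_isSquare hs ▸ ih rfl
    rcases Sym2.eq_iff.mp hf with ⟨rfl, rfl⟩ | ⟨rfl, rfl⟩
    · exact h_rt
    · rw [← hmed.compl_halfspace hs.2.1]
      rcases h_rt with h_rt | h_rt <;> simp [h_rt]

theorem inter_nonempty_of_isSquare {p q r t : V} (hs : IsSquare G p q r t) {A B : Set V}
    (hA : A = halfspace G p q ∨ A = (halfspace G p q)ᶜ)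
    (hB : B = halfspace G p r ∨ B = (halfspace G p r)ᶜ) : (A ∩ B).Nonempty := by
  obtain ⟨hpq, hrt, hpr, hqt, hpt, hqr⟩ := hs
  have := hmed.dist_eq_two_of_adj_of_adj hpq.symm hpr hqr
  have := hmed.dist_eq_two_of_adj_of_adj hqt.symm hpq.symm hpt.symm
  have := G.dist_eq_one_iff_adj.mpr hpq
  have := G.dist_eq_one_iff_adj.mpr hpr
  have := G.dist_eq_one_iff_adj.mpr hpq.symm
  have := G.dist_eq_one_iff_adj.mpr hpr.symm
  have := G.dist_eq_one_iff_adj.mpr hqt.symm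
  have := G.dist_eq_one_iff_adj.mpr hrt.symm
  have := G.dist_comm (u := r) (v := q)
  have : G.dist p p = 0 := G.dist_self
  have : G.dist q q = 0 := G.dist_self
  have : G.dist r r = 0 := G.dist_self
  rcases hA with rfl | rfl <;> rcases hB with rfl | rfl <;>
    simp only [Set.Nonempty, halfspace, Set.mem_inter_iff, Set.mem_compl_iff, Set.mem_ofPred_eq]
  exacts [⟨p, by omega⟩, ⟨r, by omega⟩, ⟨q, by omega⟩, ⟨t, by omega⟩]

theorem ne_of_isSquare {p q r t : V} (hs : IsSquare G p q r t) {A B : Set V}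
    (hA : A = halfspace G p q ∨ A = (halfspace G p q)ᶜ)
    (hB : B = halfspace G p r ∨ B = (halfspace G p r)ᶜ) : A ≠ B := by
  rintro rfl
  have hAc : Aᶜ = halfspace G p r ∨ Aᶜ = (halfspace G p r)ᶜ := by
    rcases hB with rfl | rfl <;> simp
  obtain ⟨w, hwA, hwAc⟩ := hmed.inter_nonempty_of_isSquare hs hA hAc
  exact hwAc hwA

end MedianGraph

theorem ThetaClass.halfspace_eq_or_eq_compl (hmed : MedianGraph G) {C : Set (Sym2 V)}
    (hC : ThetaClass G C) {a b c d : V} (hab : s(a, b) ∈ C) (hcd : s(c, d) ∈ C) :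
    halfspace G a b = halfspace G c d ∨ halfspace G a b = (halfspace G c d)ᶜ := by
  obtain ⟨e, he, rfl⟩ := hC
  induction e using Sym2.ind with
  | h a₀ b₀ =>
    have h_ab := hmed.halfspace_eq_or_eq_compl_of_reflTransGen he hab.2.2 rfl
    have h_cd := hmed.halfspace_eq_or_eq_compl_of_reflTransGen he hcd.2.2 rfl
    rcases h_ab with h_ab | h_ab <;> rcases h_cd with h_cd | h_cd <;> simp [h_ab, h_cd]

end

theorem square_of_incident_orthogonal_edges_general {V : Type*}
    (G : SimpleGraph V) (hmed : MedianGraph G)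
    (Ci Cj : Set (Sym2 V)) (hCi : ThetaClass G Ci) (hCj : ThetaClass G Cj)
    (x u y : V) (hxu : G.Adj x u) (hxuC : s(x, u) ∈ Ci)
    (huy : G.Adj u y) (huyC : s(u, y) ∈ Cj)
    (horth : Orthogonal G Ci Cj) :
    ∃ v : V, IsSquare G u y x v := by
  obtain ⟨p, q, r, t, hs, hpq, -, hpr, -⟩ := horth
  have hx := hCi.halfspace_eq_or_eq_compl hmed hxuC hpq
  have hy := hCj.halfspace_eq_or_eq_compl hmed (Sym2.eq_swap ▸ huyC) hpr
  obtain ⟨w, hwx, hwy⟩ := hmed.inter_nonempty_of_isSquare hs hx hy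
  have hxy : x ≠ y := by
    rintro rfl
    exact hmed.ne_of_isSquare hs hx hy rfl
  exact hmed.exists_isSquare_of_dist_lt huy hxu.symm hxy hwx hwy

/-- In a median graph, if `xu ∈ E_i` and `uy ∈ E_j` are incident
edges of two orthogonal Θ-classes, then there is a vertex `v` adjacent to both
`x` and `y` such that `uyvx` is a 4-cycle. -/
theorem square_of_incident_orthogonal_edges {V : Type*} [Fintype V]
    (G : SimpleGraph V) (hmed : MedianGraph G)
    (Ci Cj : Set (Sym2 V)) (hCi : ThetaClass G Ci) (hCj : ThetaClass G Cj)
    (x u y : V) (hxu : G.Adj x u) (hxuC : s(x, u) ∈ Ci)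
    (huy : G.Adj u y) (huyC : s(u, y) ∈ Cj)
    (horth : Orthogonal G Ci Cj) :
    ∃ v : V, IsSquare G u y x v :=
  square_of_incident_orthogonal_edges_general G hmed Ci Cj hCi hCj x u y hxu hxuC huy huyC horth

end MedianPaper
end
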